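/- arXiv:1905.10031 — 4 statements merged into one kernel-verified Lean document; each statement's English description precedes it below -/
import Mathlib

section
/- Let P and Q be probability distributions on the same discrete alphabet Σ. For δ ∈ [0,1/2], define the mixtures P(δ) := (1/2+δ)P + (1/2−δ)Q and Q(δ) := (1/2−δ)P + (1/2+δ)Q. Then for any δ′ ∈ (0,1/2] with δ ≤ δ′, one has SKL(P(δ), Q(δ)) ≤ (δ/δ′)² · SKL(P(δ′), Q(δ′)). In particular, SKL(P(δ), Q(δ)) ≤ 4δ² · SKL(P, Q). -/
open scoped BigOperators ENNReal

/-- The `a`-th term of the symmetrized KL divergence `(x - y) * (log x - log y)`,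
valued in `ℝ≥0∞`, with the convention that the term is `∞` when exactly one of the
two masses vanishes. -/
noncomputable def sklTerm (x y : ℝ) : ℝ≥0∞ :=
  if (x = 0) ↔ (y = 0) then ENNReal.ofReal ((x - y) * (Real.log x - Real.log y)) else ⊤

/-- Symmetrized Kullback-Leibler divergence `SKL(P,Q) = KL(P,Q) + KL(Q,P)` between
two probability mass functions on a discrete alphabet. -/
noncomputable def SKL {α : Type*} (P Q : α → ℝ) : ℝ≥0∞ := ∑' a, sklTerm (P a) (Q a)

/-- `P` is a probability mass function. -/
def IsPMF {α : Type*} (P : α → ℝ) : Prop := (∀ a, 0 ≤ P a) ∧ (∑' a, P a) = 1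

/-!
For `x, y > 0` write `s = x + y` and `u = (x - y) / s`; then the symmetrized KL term is
`(x - y) (log x - log y) = s · u (log (1 + u) - log (1 - u)) = s · ∑ 2 u ^ (2k+2) / (2k+1)`.
Passing from `(P(δ'), Q(δ'))` to `(P(δ), Q(δ))` keeps `s` and multiplies `u` by `r = δ / δ'`,
so each term of the series is multiplied by `r ^ (2k+2) ≤ r ^ 2`. The second claim is the
case `δ' = 1/2`, where `(P(δ'), Q(δ')) = (P, Q)`.
-/

open Real

lemma mul_log_one_add_sub_log_one_sub_scale_le {u r : ℝ} (hu : |u| < 1) (hr0 : 0 ≤ r)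
    (hr1 : r ≤ 1) :
    r * u * (log (1 + r * u) - log (1 - r * u)) ≤ r ^ 2 * (u * (log (1 + u) - log (1 - u))) := by
  have hru : |r * u| < 1 := by
    rw [abs_mul, abs_of_nonneg hr0]
    nlinarith [abs_nonneg u]
  refine hasSum_le (fun k => ?_) ((hasSum_log_sub_log_of_abs_lt_one hru).mul_left (r * u))
    (((hasSum_log_sub_log_of_abs_lt_one hu).mul_left u).mul_left (r ^ 2))
  have hpow : r ^ (2 * k + 2) ≤ r ^ 2 := pow_le_pow_of_le_one hr0 hr1 (by omega)
  have hu_even : 0 ≤ u ^ (2 * k + 2) := Even.pow_nonneg ⟨k + 1, by ring⟩ u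
  calc r * u * (2 * (1 / (2 * k + 1)) * (r * u) ^ (2 * k + 1))
      = 2 * (1 / (2 * k + 1)) * (r ^ (2 * k + 2) * u ^ (2 * k + 2)) := by ring
    _ ≤ 2 * (1 / (2 * k + 1)) * (r ^ 2 * u ^ (2 * k + 2)) := by gcongr
    _ = r ^ 2 * (u * (2 * (1 / (2 * k + 1)) * u ^ (2 * k + 1))) := by ring

lemma abs_sub_div_add_lt_one {x y : ℝ} (hx : 0 < x) (hy : 0 < y) : |(x - y) / (x + y)| < 1 := by
  rw [abs_div, abs_of_pos (add_pos hx hy), div_lt_one (add_pos hx hy), abs_sub_lt_iff]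
  constructor <;> linarith

lemma sub_mul_log_sub_log_eq {x y : ℝ} (hx : 0 < x) (hy : 0 < y) :
    (x - y) * (log x - log y) =
      (x + y) * ((x - y) / (x + y) *
        (log (1 + (x - y) / (x + y)) - log (1 - (x - y) / (x + y)))) := by
  have hs : 0 < x + y := add_pos hx hy
  have h1 : 1 + (x - y) / (x + y) = 2 * x / (x + y) := by field_simp; ring
  have h2 : 1 - (x - y) / (x + y) = 2 * y / (x + y) := by field_simp; ring
  rw [h1, h2, log_div (by positivity) hs.ne', log_div (by positivity) hs.ne',
    log_mul two_ne_zero hx.ne', log_mul two_ne_zero hy.ne']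
  field_simp
  ring

lemma sklTerm_self (x : ℝ) : sklTerm x x = 0 := by
  simp [sklTerm]

lemma sklTerm_mix_le {x y r : ℝ} (hx : 0 ≤ x) (hy : 0 ≤ y) (hr0 : 0 ≤ r) (hr1 : r ≤ 1) :
    sklTerm ((1 + r) / 2 * x + (1 - r) / 2 * y) ((1 - r) / 2 * x + (1 + r) / 2 * y)
      ≤ ENNReal.ofReal (r ^ 2) * sklTerm x y := by
  rcases hr0.eq_or_lt with rfl | hr
  · simp [sklTerm_self]
  by_cases hxy : (x = 0 ↔ y = 0)
  swap
  · rw [show sklTerm x y = ⊤ from if_neg hxy, ENNReal.mul_top (by positivity)]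
    exact le_top
  rcases hx.eq_or_lt with rfl | hx
  · obtain rfl := hxy.1 rfl
    simp [sklTerm_self]
  have hy : 0 < y := hy.lt_of_ne' fun h => hx.ne' (hxy.2 h)
  set x' := (1 + r) / 2 * x + (1 - r) / 2 * y
  set y' := (1 - r) / 2 * x + (1 + r) / 2 * y
  have hx' : 0 < x' := by positivity
  have hy' : 0 < y' := by positivity
  have hs : x' + y' = x + y := by simp only [x', y']; ring
  have hu : (x' - y') / (x' + y') = r * ((x - y) / (x + y)) := by
    rw [hs, show x' - y' = r * (x - y) by simp only [x', y']; ring, mul_div_assoc]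
  rw [sklTerm, sklTerm, if_pos (iff_of_false hx'.ne' hy'.ne'),
    if_pos (iff_of_false hx.ne' hy.ne'), ← ENNReal.ofReal_mul (sq_nonneg r)]
  refine ENNReal.ofReal_le_ofReal ?_
  rw [sub_mul_log_sub_log_eq hx' hy', sub_mul_log_sub_log_eq hx hy, hu, hs,
    mul_left_comm (r ^ 2) (x + y)]
  exact mul_le_mul_of_nonneg_left
    (mul_log_one_add_sub_log_one_sub_scale_le (abs_sub_div_add_lt_one hx hy) hr0 hr1)
    (add_pos hx hy).le

lemma SKL_mix_le {α : Type*} {P Q : α → ℝ} (hP : ∀ a, 0 ≤ P a) (hQ : ∀ a, 0 ≤ Q a) {r : ℝ}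
    (hr0 : 0 ≤ r) (hr1 : r ≤ 1) :
    SKL (fun a => (1 + r) / 2 * P a + (1 - r) / 2 * Q a)
        (fun a => (1 - r) / 2 * P a + (1 + r) / 2 * Q a)
      ≤ ENNReal.ofReal (r ^ 2) * SKL P Q := by
  rw [SKL, SKL, ← ENNReal.tsum_mul_left]
  exact ENNReal.tsum_le_tsum fun a => sklTerm_mix_le (hP a) (hQ a) hr0 hr1

theorem stmt0_general {α : Type*} (P Q : α → ℝ) (hP : IsPMF P) (hQ : IsPMF Q)
    (δ δ' : ℝ) (hδ0 : 0 ≤ δ) (hδ : δ ≤ 1 / 2) (hδ'0 : 0 < δ') (hδ' : δ' ≤ 1 / 2)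
    (hle : δ ≤ δ') :
    SKL (fun a => (1 / 2 + δ) * P a + (1 / 2 - δ) * Q a)
        (fun a => (1 / 2 - δ) * P a + (1 / 2 + δ) * Q a)
      ≤ ENNReal.ofReal ((δ / δ') ^ 2) *
        SKL (fun a => (1 / 2 + δ') * P a + (1 / 2 - δ') * Q a)
            (fun a => (1 / 2 - δ') * P a + (1 / 2 + δ') * Q a) ∧
    SKL (fun a => (1 / 2 + δ) * P a + (1 / 2 - δ) * Q a)
        (fun a => (1 / 2 - δ) * P a + (1 / 2 + δ) * Q a)
      ≤ ENNReal.ofReal (4 * δ ^ 2) * SKL P Q := by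
  constructor
  · have hmix := SKL_mix_le (P := fun a => (1 / 2 + δ') * P a + (1 / 2 - δ') * Q a)
      (Q := fun a => (1 / 2 - δ') * P a + (1 / 2 + δ') * Q a)
      (fun a => by nlinarith [hP.1 a, hQ.1 a]) (fun a => by nlinarith [hP.1 a, hQ.1 a])
      (div_nonneg hδ0 hδ'0.le) ((div_le_one hδ'0).2 hle)
    convert hmix using 3 <;> field_simp <;> ring
  · have hmix := SKL_mix_le hP.1 hQ.1 (r := 2 * δ) (by linarith) (by linarith)
    convert hmix using 3 <;> ring_nf

theorem stmt0 {α : Type*} [Countable α] (P Q : α → ℝ) (hP : IsPMF P) (hQ : IsPMF Q)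
    (δ δ' : ℝ) (hδ0 : 0 ≤ δ) (hδ : δ ≤ 1 / 2) (hδ'0 : 0 < δ') (hδ' : δ' ≤ 1 / 2)
    (hle : δ ≤ δ') :
    SKL (fun a => (1 / 2 + δ) * P a + (1 / 2 - δ) * Q a)
        (fun a => (1 / 2 - δ) * P a + (1 / 2 + δ) * Q a)
      ≤ ENNReal.ofReal ((δ / δ') ^ 2) *
        SKL (fun a => (1 / 2 + δ') * P a + (1 / 2 - δ') * Q a)
            (fun a => (1 / 2 - δ') * P a + (1 / 2 + δ') * Q a) ∧
    SKL (fun a => (1 / 2 + δ) * P a + (1 / 2 - δ) * Q a)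
        (fun a => (1 / 2 - δ) * P a + (1 / 2 + δ) * Q a)
      ≤ ENNReal.ofReal (4 * δ ^ 2) * SKL P Q :=
  stmt0_general P Q hP hQ δ δ' hδ0 hδ hδ'0 hδ' hle
end

section
/- Fix d ≥ 1, γ > 0, and a finite alphabet Σ with |Σ| ≤ d. Let Δ_γ be the set of probability vectors p on Σ with p_a ≥ γ for all a ∈ Σ. Then there exists η = η(|Σ|, γ, d) < 1 such that for every function f : Σ^d → Σ and all P ≠ Q in Δ_γ, KL(f_*(P^{⊗d}), f_*(Q^{⊗d})) ≤ η · KL(P^{⊗d}, Q^{⊗d}) = η · d · KL(P,Q). -/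
open scoped BigOperators

/-- Kullback-Leibler divergence between two probability mass functions on a finite alphabet. -/
noncomputable def KLf {α : Type*} [Fintype α] (P Q : α → ℝ) : ℝ :=
  ∑ a, P a * Real.log (P a / Q a)

/-- The `d`-fold product `P^{⊗d}` of a probability mass function `P`. -/
noncomputable def prodPMF {α : Type*} (d : ℕ) (P : α → ℝ) : (Fin d → α) → ℝ :=
  fun x => ∏ i, P (x i)

/-- Pushforward of a probability mass function `μ` on `Σ^d` by a function `f : Σ^d → Σ`. -/
noncomputable def pushf {α : Type*} [Fintype α] [DecidableEq α] {d : ℕ}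
    (f : (Fin d → α) → α) (μ : (Fin d → α) → ℝ) : α → ℝ :=
  fun s => ∑ x : Fin d → α, if f x = s then μ x else 0

/-!
Write `u = P^{⊗d}` and `v = Q^{⊗d}`. The chain rule along the fibres of `f` splits `KL(u, v)` into
`KL(f_*u, f_*v)` plus one conditional divergence per fibre, and the log-sum inequality bounds each
of these below by a (rescaled) squared Hellinger distance. With `M = max (Q - P)`, attained at `b`,
and any letter `a` with `Q a ≤ P a`, the likelihood ratios satisfy `(1 + M) P(b)/Q(b) ≤ P(a)/Q(a)`.
Among the `d + 1 > |Σ|` words `a^k b^(d-k)` two lie in one fibre, and their likelihood ratios under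
`u / v` still differ by the factor `1 + M`; since all masses are at least `γ^d`, the Hellinger term
of that fibre is at least `γ^{6d} M² / 16`. On the other hand
`KL(P, Q) ≤ χ²(P, Q) ≤ ‖P - Q‖₁² / γ ≤ (2 d M)² / γ` and `KL(u, v) = d KL(P, Q)`, which gives
`η = 1 - γ^{6d+1} / (64 d³)`.
-/

open Finset Real

lemma sub_add_sq_sqrt_sub_le_mul_log_div {a b : ℝ} (ha : 0 < a) (hb : 0 < b) :
    a - b + (√a - √b) ^ 2 ≤ a * log (a / b) := by
  have hp : 0 < √a := sqrt_pos.2 ha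
  have hq : 0 < √b := sqrt_pos.2 hb
  have hlog : log (a / b) = 2 * log (√a / √b) := by
    rw [← log_rpow (by positivity), div_rpow hp.le hq.le]
    norm_num [sq_sqrt ha.le, sq_sqrt hb.le]
  have h := one_sub_inv_le_log_of_pos (div_pos hp hq)
  rw [inv_div] at h
  have hcancel : √a ^ 2 * (√b / √a) = √a * √b := by field_simp
  calc a - b + (√a - √b) ^ 2 = 2 * √a ^ 2 * (1 - √b / √a) := by
        linear_combination (-1) * sq_sqrt ha.le + sq_sqrt hb.le + 2 * hcancel
    _ ≤ 2 * √a ^ 2 * log (√a / √b) := by gcongr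
    _ = a * log (a / b) := by rw [hlog, sq_sqrt ha.le]; ring

lemma sq_sub_le_four_mul_sq_sqrt_sub {a b : ℝ} (ha : 0 ≤ a) (hb : 0 ≤ b) (ha1 : a ≤ 1)
    (hb1 : b ≤ 1) : (a - b) ^ 2 ≤ 4 * (√a - √b) ^ 2 := by
  have hsum : √a + √b ≤ 2 := by linarith [sqrt_le_one.2 ha1, sqrt_le_one.2 hb1]
  have hfac : a - b = (√a - √b) * (√a + √b) := by
    linear_combination (-1) * sq_sqrt ha + sq_sqrt hb
  have hsq : (√a + √b) ^ 2 ≤ 4 := by nlinarith [sqrt_nonneg a, sqrt_nonneg b]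
  rw [hfac, mul_pow]
  nlinarith [sq_nonneg (√a - √b)]

lemma mul_log_div_le_sub_add_sq_div {a b : ℝ} (ha : 0 < a) (hb : 0 < b) :
    a * log (a / b) ≤ a - b + (a - b) ^ 2 / b := by
  calc a * log (a / b) ≤ a * (a / b - 1) := by
        gcongr; exact log_le_sub_one_of_pos (div_pos ha hb)
    _ = a - b + (a - b) ^ 2 / b := by field_simp; ring

/-- Read `p, q` as the masses of two points under one measure and `s, t` under another: a gap
`1 + δ` between the likelihood ratios `p / s` and `q / t` forces an `L²` discrepancy. -/
lemma sq_mul_le_two_mul_add_sq_of_ratio_gap {p q s t κ δ : ℝ} (hs : 0 ≤ s) (hs1 : s ≤ 1)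
    (ht : 0 ≤ t) (ht1 : t ≤ 1) (hκ : 0 ≤ κ) (hκqs : κ ≤ q * s) (hδ : 0 ≤ δ)
    (h : (1 + δ) * (q * s) ≤ p * t) : (κ * δ) ^ 2 ≤ 2 * ((p - s) ^ 2 + (q - t) ^ 2) := by
  have hlin : κ * δ ≤ (p - s) * t - (q - t) * s := by nlinarith
  have hcs : ((p - s) * t - (q - t) * s) ^ 2 ≤ ((p - s) ^ 2 + (q - t) ^ 2) * (t ^ 2 + s ^ 2) := by
    nlinarith [sq_nonneg ((p - s) * s + (q - t) * t)]
  have hts : t ^ 2 + s ^ 2 ≤ 2 := by nlinarith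
  calc (κ * δ) ^ 2 ≤ ((p - s) * t - (q - t) * s) ^ 2 := pow_le_pow_left₀ (by positivity) hlin 2
    _ ≤ ((p - s) ^ 2 + (q - t) ^ 2) * (t ^ 2 + s ^ 2) := hcs
    _ ≤ ((p - s) ^ 2 + (q - t) ^ 2) * 2 := by gcongr
    _ = 2 * ((p - s) ^ 2 + (q - t) ^ 2) := mul_comm _ _

section LogSum

variable {ι : Type*} (S : Finset ι) (u v : ι → ℝ)

/-- `(∑ x ∈ S, u x)` times the squared Hellinger distance between the normalizations of `u` and
`v` restricted to `S`. -/
noncomputable def restrictHellinger : ℝ :=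
  ∑ x ∈ S, (√(u x) - √(v x * ((∑ y ∈ S, u y) / ∑ y ∈ S, v y))) ^ 2

lemma restrictHellinger_nonneg : 0 ≤ restrictHellinger S u v :=
  sum_nonneg fun _ _ => sq_nonneg _

variable {S u v}

theorem mul_log_div_add_restrictHellinger_le (hu : ∀ x ∈ S, 0 < u x) (hv : ∀ x ∈ S, 0 < v x) :
    (∑ x ∈ S, u x) * log ((∑ x ∈ S, u x) / ∑ x ∈ S, v x) + restrictHellinger S u v
      ≤ ∑ x ∈ S, u x * log (u x / v x) := by
  rcases S.eq_empty_or_nonempty with rfl | hS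
  · simp [restrictHellinger]
  set r := (∑ x ∈ S, u x) / ∑ x ∈ S, v x
  have hV : 0 < ∑ x ∈ S, v x := sum_pos hv hS
  have hr : 0 < r := div_pos (sum_pos hu hS) hV
  have hmass : ∑ x ∈ S, (u x - v x * r) = 0 := by
    rw [sum_sub_distrib, ← sum_mul, mul_div_cancel₀ _ hV.ne', sub_self]
  calc (∑ x ∈ S, u x) * log r + restrictHellinger S u v
      = ∑ x ∈ S, (u x - v x * r + (√(u x) - √(v x * r)) ^ 2 + u x * log r) := by
        rw [sum_add_distrib, sum_add_distrib, hmass, ← sum_mul, restrictHellinger]; ring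
    _ ≤ ∑ x ∈ S, u x * log (u x / v x) := by
        refine sum_le_sum fun x hx => ?_
        have hvr : 0 < v x * r := mul_pos (hv x hx) hr
        have hsplit : log (u x / v x) = log (u x / (v x * r)) + log r := by
          rw [← log_mul (div_pos (hu x hx) hvr).ne' hr.ne', div_mul_eq_div_div,
            div_mul_cancel₀ _ hr.ne']
        rw [hsplit, mul_add]
        linarith [sub_add_sq_sqrt_sub_le_mul_log_div (hu x hx) hvr]

theorem le_restrictHellinger_of_ratio_gap {c δ : ℝ} {x y : ι} (hc : 0 < c) (hδ : 0 ≤ δ)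
    (hu : ∀ z ∈ S, c ≤ u z) (hv : ∀ z ∈ S, c ≤ v z) (hU : ∑ z ∈ S, u z ≤ 1)
    (hV : ∑ z ∈ S, v z ≤ 1) (hx : x ∈ S) (hy : y ∈ S)
    (hxy : (1 + δ) * (u y / v y) ≤ u x / v x) :
    c ^ 6 * δ ^ 2 / 16 ≤ restrictHellinger S u v := by
  have hle_sum : ∀ w : ι → ℝ, (∀ z ∈ S, c ≤ w z) → ∀ z ∈ S, w z ≤ ∑ z ∈ S, w z :=
    fun w hw z hz => single_le_sum (fun z hz => hc.le.trans (hw z hz)) hz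
  set r := (∑ z ∈ S, u z) / ∑ z ∈ S, v z
  have hUc : c ≤ ∑ z ∈ S, u z := (hu x hx).trans (hle_sum u hu x hx)
  have hV0 : 0 < ∑ z ∈ S, v z := (hc.trans_le (hv x hx)).trans_le (hle_sum v hv x hx)
  have hUr : ∑ z ∈ S, u z ≤ r := le_div_self (hc.le.trans hUc) hV0 hV
  have hu1 : ∀ z ∈ S, u z ≤ 1 := fun z hz => (hle_sum u hu z hz).trans hU
  have hvr1 : ∀ z ∈ S, v z * r ≤ 1 := fun z hz =>
    calc v z * r = (∑ z ∈ S, u z) * (v z / ∑ z ∈ S, v z) := by ring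
      _ ≤ (∑ z ∈ S, u z) * 1 :=
          mul_le_mul_of_nonneg_left (div_le_one_of_le₀ (hle_sum v hv z hz) hV0.le)
            (hc.le.trans hUc)
      _ ≤ 1 := by rwa [mul_one]
  have hr : 0 < r := hc.trans_le (hUc.trans hUr)
  have hvr0 : ∀ z ∈ S, 0 ≤ v z * r := fun z hz => mul_nonneg (hc.le.trans (hv z hz)) hr.le
  have hκ : c ^ 3 ≤ u y * (v x * r) :=
    calc c ^ 3 = c * (c * c) := by ring
      _ ≤ u y * (v x * r) := by
          gcongr
          exacts [hc.le.trans (hu y hy), hu y hy, hc.le.trans (hv x hx), hv x hx, hUc.trans hUr]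
  have hgap : (1 + δ) * (u y * (v x * r)) ≤ u x * (v y * r) := by
    have hvx := hc.trans_le (hv x hx)
    have hvy := hc.trans_le (hv y hy)
    calc (1 + δ) * (u y * (v x * r)) = (1 + δ) * (u y / v y) * (v x * v y * r) := by
          field_simp
      _ ≤ u x / v x * (v x * v y * r) := by gcongr
      _ = u x * (v y * r) := by field_simp
  have hsep := sq_mul_le_two_mul_add_sq_of_ratio_gap (hvr0 x hx) (hvr1 x hx) (hvr0 y hy)
    (hvr1 y hy) (by positivity) hκ hδ hgap
  have hterm : ∀ z ∈ S, (u z - v z * r) ^ 2 ≤ 4 * restrictHellinger S u v := fun z hz =>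
    (sq_sub_le_four_mul_sq_sqrt_sub (hc.le.trans (hu z hz)) (hvr0 z hz) (hu1 z hz)
      (hvr1 z hz)).trans <| by
        gcongr
        exact single_le_sum (f := fun z => (√(u z) - √(v z * r)) ^ 2) (fun _ _ => sq_nonneg _) hz
  calc c ^ 6 * δ ^ 2 / 16 = (c ^ 3 * δ) ^ 2 / 16 := by ring
    _ ≤ restrictHellinger S u v := by linarith [hterm x hx, hterm y hy]

end LogSum

section Product

lemma pow_le_prodPMF {α : Type*} {d : ℕ} {P : α → ℝ} {γ : ℝ} (hγ : 0 ≤ γ) (hP : ∀ a, γ ≤ P a)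
    (x : Fin d → α) : γ ^ d ≤ prodPMF d P x :=
  calc γ ^ d = ∏ _i : Fin d, γ := by simp
    _ ≤ prodPMF d P x := prod_le_prod (fun _ _ => hγ) (fun i _ => hP (x i))

lemma prodPMF_pos {α : Type*} {d : ℕ} {P : α → ℝ} (hP : ∀ a, 0 < P a) (x : Fin d → α) :
    0 < prodPMF d P x :=
  prod_pos fun i _ => hP (x i)

variable {α : Type*} [Fintype α] {d : ℕ} {P Q : α → ℝ}

lemma sum_prodPMF (hP1 : ∑ a, P a = 1) : ∑ x : Fin d → α, prodPMF d P x = 1 := by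
  simp only [prodPMF, ← Fintype.prod_sum, hP1, prod_const_one]

lemma sum_prodPMF_mul_apply (hP1 : ∑ a, P a = 1) (g : α → ℝ) (i : Fin d) :
    ∑ x : Fin d → α, prodPMF d P x * g (x i) = ∑ a, P a * g a := by
  have hfactor : ∀ x : Fin d → α,
      prodPMF d P x * g (x i) = ∏ j, P (x j) * (if j = i then g (x j) else 1) := fun x => by
    rw [prod_mul_distrib, prod_ite_eq', if_pos (mem_univ i), prodPMF]
  have hmarginal : ∀ j,
      ∑ a, P a * (if j = i then g a else 1) = if j = i then ∑ a, P a * g a else 1 :=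
    fun j => by split_ifs <;> simp [hP1]
  simp only [hfactor]
  rw [← Fintype.prod_sum (fun j a => P a * if j = i then g a else 1)]
  simp only [hmarginal, prod_ite_eq', mem_univ, if_true]

theorem KLf_prodPMF (hP : ∀ a, 0 < P a) (hQ : ∀ a, 0 < Q a) (hP1 : ∑ a, P a = 1) :
    KLf (prodPMF d P) (prodPMF d Q) = d * KLf P Q := by
  have hlog : ∀ x : Fin d → α,
      log (prodPMF d P x / prodPMF d Q x) = ∑ i, log (P (x i) / Q (x i)) := fun x => by
    rw [prodPMF, prodPMF, ← prod_div_distrib, log_prod fun i _ => (div_pos (hP _) (hQ _)).ne']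
  calc KLf (prodPMF d P) (prodPMF d Q)
      = ∑ i : Fin d, ∑ x, prodPMF d P x * log (P (x i) / Q (x i)) := by
        simp only [KLf, hlog, mul_sum]; exact sum_comm
    _ = ∑ _i : Fin d, KLf P Q :=
        sum_congr rfl fun i _ => sum_prodPMF_mul_apply hP1 (fun a => log (P a / Q a)) i
    _ = d * KLf P Q := by simp

end Product

section Letters

variable {α : Type*} [Fintype α] {P Q : α → ℝ}

lemma KLf_le_sq_sum_abs_sub_div {γ : ℝ} (hγ : 0 < γ) (hP : ∀ a, 0 < P a) (hQ : ∀ a, γ ≤ Q a)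
    (hPQ : ∑ a, P a = ∑ a, Q a) : KLf P Q ≤ (∑ a, |P a - Q a|) ^ 2 / γ :=
  calc KLf P Q ≤ ∑ a, (P a - Q a + |P a - Q a| ^ 2 / γ) := sum_le_sum fun a _ => by
        rw [sq_abs]
        calc P a * log (P a / Q a) ≤ P a - Q a + (P a - Q a) ^ 2 / Q a :=
              mul_log_div_le_sub_add_sq_div (hP a) (hγ.trans_le (hQ a))
          _ ≤ P a - Q a + (P a - Q a) ^ 2 / γ := by gcongr; exact hQ a
    _ = (∑ a, |P a - Q a| ^ 2) / γ := by
        rw [sum_add_distrib, sum_sub_distrib, hPQ, sub_self, zero_add, sum_div]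
    _ ≤ (∑ a, |P a - Q a|) ^ 2 / γ := by
        gcongr; exact sum_sq_le_sq_sum_of_nonneg fun a _ => abs_nonneg _

lemma sum_abs_sub_le_two_mul_card_mul {M : ℝ} (hM : 0 ≤ M) (hQP : ∀ c, Q c - P c ≤ M)
    (hPQ : ∑ a, P a = ∑ a, Q a) : ∑ c, |P c - Q c| ≤ 2 * Fintype.card α * M := by
  have habs : ∀ c, |P c - Q c| = 2 * max (Q c - P c) 0 - (Q c - P c) := fun c => by
    rcases le_total (Q c - P c) 0 with h | h
    · rw [max_eq_right h, abs_of_nonneg (by linarith)]; ring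
    · rw [max_eq_left h, abs_of_nonpos (by linarith)]; ring
  calc ∑ c, |P c - Q c| = 2 * ∑ c, max (Q c - P c) 0 := by
        simp only [habs, sum_sub_distrib, ← mul_sum, hPQ, sub_self, sub_zero]
    _ ≤ 2 * ∑ _c : α, M := by gcongr with c; exact max_le (hQP c) hM
    _ = 2 * Fintype.card α * M := by rw [sum_const, card_univ, nsmul_eq_mul]; ring

lemma exists_ratio_gap {γ : ℝ} (hγ : 0 < γ) (hP : ∀ a, γ ≤ P a) (hQ : ∀ a, γ ≤ Q a)
    (hP1 : ∑ a, P a = 1) (hQ1 : ∑ a, Q a = 1) :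
    ∃ a b : α, ∃ M : ℝ, 0 ≤ M ∧ (1 + M) * (P b / Q b) ≤ P a / Q a ∧
      KLf P Q ≤ (2 * Fintype.card α * M) ^ 2 / γ := by
  have hP0 : ∀ a, 0 < P a := fun a => hγ.trans_le (hP a)
  have hQ0 : ∀ a, 0 < Q a := fun a => hγ.trans_le (hQ a)
  have hne : (univ : Finset α).Nonempty := nonempty_of_sum_ne_zero (by rw [hP1]; exact one_ne_zero)
  obtain ⟨b, -, hb⟩ := exists_max_image univ (fun c => Q c - P c) hne
  obtain ⟨a, -, ha⟩ := exists_le_of_sum_le hne (hQ1.trans hP1.symm).le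
  obtain ⟨c, -, hc⟩ := exists_le_of_sum_le hne (hP1.trans hQ1.symm).le
  have hM : 0 ≤ Q b - P b := by linarith [hb c (mem_univ c)]
  have hPb1 : P b ≤ 1 := hP1 ▸ single_le_sum (fun c _ => (hP0 c).le) (mem_univ b)
  refine ⟨a, b, Q b - P b, hM, ?_, ?_⟩
  · calc (1 + (Q b - P b)) * (P b / Q b) = (P b + (Q b - P b) * P b) / Q b := by ring
      _ ≤ Q b / Q b := div_le_div_of_nonneg_right (by nlinarith) (hQ0 b).le
      _ = 1 := div_self (hQ0 b).ne'
      _ ≤ P a / Q a := (one_le_div (hQ0 a)).2 ha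
  · refine (KLf_le_sq_sum_abs_sub_div hγ hP0 hQ (hP1.trans hQ1.symm)).trans ?_
    gcongr
    exact sum_abs_sub_le_two_mul_card_mul hM (fun c => hb c (mem_univ c)) (hP1.trans hQ1.symm)

end Letters

section Words

variable {α : Type*}

def prefixWord (d : ℕ) (a b : α) (k : ℕ) : Fin d → α := fun i => if (i : ℕ) < k then a else b

lemma prodPMF_prefixWord {d k : ℕ} (hk : k ≤ d) (P : α → ℝ) (a b : α) :
    prodPMF d P (prefixWord d a b k) = P a ^ k * P b ^ (d - k) := by
  obtain ⟨m, rfl⟩ := Nat.exists_eq_add_of_le hk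
  show ∏ i : Fin (k + m), P (if (i : ℕ) < k then a else b) = _
  rw [Fin.prod_univ_eq_prod_range (fun i => P (if i < k then a else b)), prod_range_add,
    prod_congr rfl fun i hi => by rw [if_pos (mem_range.1 hi)]]
  simp

lemma mul_pow_mul_pow_le_of_lt {ρa ρb δ : ℝ} (hρb : 0 ≤ ρb) (hδ : 0 ≤ δ) (h : (1 + δ) * ρb ≤ ρa)
    {i j d : ℕ} (hij : i < j) (hjd : j ≤ d) :
    (1 + δ) * (ρa ^ i * ρb ^ (d - i)) ≤ ρa ^ j * ρb ^ (d - j) := by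
  obtain ⟨m, rfl⟩ := Nat.exists_eq_add_of_lt hij
  rw [show d - i = d - (i + m + 1) + (m + 1) by omega, pow_add]
  have hρa : 0 ≤ ρa := (mul_nonneg (by linarith) hρb).trans h
  calc (1 + δ) * (ρa ^ i * (ρb ^ (d - (i + m + 1)) * ρb ^ (m + 1)))
      = ρa ^ i * ρb ^ (d - (i + m + 1)) * ((1 + δ) * ρb ^ (m + 1)) := by ring
    _ ≤ ρa ^ i * ρb ^ (d - (i + m + 1)) * ((1 + δ) * ρb) ^ (m + 1) := by
        rw [mul_pow]; gcongr; exact le_self_pow₀ (by linarith) (by omega)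
    _ ≤ ρa ^ i * ρb ^ (d - (i + m + 1)) * ρa ^ (m + 1) := by gcongr
    _ = ρa ^ (i + m + 1) * ρb ^ (d - (i + m + 1)) := by ring

lemma ratio_prodPMF_prefixWord_gap {P Q : α → ℝ} {a b : α} {δ : ℝ} (hPb : 0 ≤ P b)
    (hQb : 0 ≤ Q b) (hδ : 0 ≤ δ) (hab : (1 + δ) * (P b / Q b) ≤ P a / Q a) {d i j : ℕ}
    (hij : i < j) (hjd : j ≤ d) :
    (1 + δ) * (prodPMF d P (prefixWord d a b i) / prodPMF d Q (prefixWord d a b i))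
      ≤ prodPMF d P (prefixWord d a b j) / prodPMF d Q (prefixWord d a b j) := by
  have hratio : ∀ k ≤ d, prodPMF d P (prefixWord d a b k) / prodPMF d Q (prefixWord d a b k)
      = (P a / Q a) ^ k * (P b / Q b) ^ (d - k) := fun k hk => by
    rw [prodPMF_prefixWord hk, prodPMF_prefixWord hk, div_pow, div_pow]; ring
  rw [hratio i (hij.le.trans hjd), hratio j hjd]
  exact mul_pow_mul_pow_le_of_lt (div_nonneg hPb hQb) hδ hab hij hjd

lemma exists_lt_prefixWord_eq [Fintype α] {d : ℕ} (hcard : Fintype.card α ≤ d)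
    (f : (Fin d → α) → α) (a b : α) :
    ∃ i j, i < j ∧ j ≤ d ∧ f (prefixWord d a b i) = f (prefixWord d a b j) := by
  obtain ⟨k, l, hkl, hf⟩ := Fintype.exists_ne_map_eq_of_card_lt
    (fun k : Fin (d + 1) => f (prefixWord d a b k)) (by rw [Fintype.card_fin]; omega)
  rcases Fin.lt_or_lt_of_ne hkl with h | h
  · exact ⟨k, l, h, Nat.lt_succ_iff.1 l.2, hf⟩
  · exact ⟨l, k, h, Nat.lt_succ_iff.1 k.2, hf.symm⟩

end Words

section Pushforward

variable {α : Type*} [Fintype α] [DecidableEq α] {d : ℕ}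

lemma pushf_eq_sum_filter (f : (Fin d → α) → α) (μ : (Fin d → α) → ℝ) (s : α) :
    pushf f μ s = ∑ x with f x = s, μ x :=
  (sum_filter _ _).symm

theorem KLf_pushf_add_restrictHellinger_le (f : (Fin d → α) → α) {u v : (Fin d → α) → ℝ}
    (hu : ∀ x, 0 < u x) (hv : ∀ x, 0 < v x) (s : α) :
    KLf (pushf f u) (pushf f v) + restrictHellinger {x | f x = s} u v ≤ KLf u v :=
  calc KLf (pushf f u) (pushf f v) + restrictHellinger {x | f x = s} u v
      ≤ ∑ t, (pushf f u t * log (pushf f u t / pushf f v t)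
          + restrictHellinger {x | f x = t} u v) := by
        rw [sum_add_distrib, KLf]
        gcongr
        exact single_le_sum (f := fun t => restrictHellinger {x | f x = t} u v)
          (fun t _ => restrictHellinger_nonneg _ _ _) (mem_univ s)
    _ ≤ ∑ t, ∑ x with f x = t, u x * log (u x / v x) := by
        gcongr with t
        simp only [pushf_eq_sum_filter]
        exact mul_log_div_add_restrictHellinger_le (fun x _ => hu x) (fun x _ => hv x)
    _ = KLf u v := sum_fiberwise _ _ _

theorem exists_le_restrictHellinger_fiber (hcard : Fintype.card α ≤ d) (f : (Fin d → α) → α)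
    {P Q : α → ℝ} {γ M : ℝ} {a b : α} (hγ : 0 < γ) (hP : ∀ a, γ ≤ P a) (hQ : ∀ a, γ ≤ Q a)
    (hP1 : ∑ a, P a = 1) (hQ1 : ∑ a, Q a = 1) (hM : 0 ≤ M)
    (hab : (1 + M) * (P b / Q b) ≤ P a / Q a) :
    ∃ s, (γ ^ d) ^ 6 * M ^ 2 / 16
      ≤ restrictHellinger {x | f x = s} (prodPMF d P) (prodPMF d Q) := by
  have hP0 : ∀ a, 0 < P a := fun a => hγ.trans_le (hP a)
  have hQ0 : ∀ a, 0 < Q a := fun a => hγ.trans_le (hQ a)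
  have hfibre_mass : ∀ {R : α → ℝ}, (∀ a, 0 < R a) → ∑ a, R a = 1 → ∀ s,
      ∑ x with f x = s, prodPMF d R x ≤ 1 := fun hR hR1 _ =>
    (sum_le_univ_sum_of_nonneg fun x => (prodPMF_pos hR x).le).trans (sum_prodPMF hR1).le
  obtain ⟨i, j, hij, hjd, hfij⟩ := exists_lt_prefixWord_eq hcard f a b
  exact ⟨f (prefixWord d a b j), le_restrictHellinger_of_ratio_gap (pow_pos hγ d) hM
    (fun x _ => pow_le_prodPMF hγ.le hP x) (fun x _ => pow_le_prodPMF hγ.le hQ x)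
    (hfibre_mass hP0 hP1 _) (hfibre_mass hQ0 hQ1 _) (by simp) (by simp [hfij])
    (ratio_prodPMF_prefixWord_gap (hP0 b).le (hQ0 b).le hM hab hij hjd)⟩

end Pushforward

/-- Restricted strong data processing inequality for discrete functions:
if `|Σ| ≤ d` and `P, Q` have all their masses bounded below by `γ > 0`, then every
function `f : Σ^d → Σ` contracts KL divergence of `d`-fold products by a factor `η < 1`
depending only on `|Σ|`, `γ` and `d`. -/
theorem stmt3 (d : ℕ) (hd : 1 ≤ d) (γ : ℝ) (hγ : 0 < γ)
    (α : Type*) [Fintype α] [DecidableEq α] (hcard : Fintype.card α ≤ d) :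
    ∃ η : ℝ, η < 1 ∧
      ∀ f : (Fin d → α) → α, ∀ P Q : α → ℝ,
        (∀ a, γ ≤ P a) → (∑ a, P a) = 1 →
        (∀ a, γ ≤ Q a) → (∑ a, Q a) = 1 → P ≠ Q →
        KLf (pushf f (prodPMF d P)) (pushf f (prodPMF d Q))
            ≤ η * KLf (prodPMF d P) (prodPMF d Q) ∧
        KLf (prodPMF d P) (prodPMF d Q) = d * KLf P Q := by
  have hd0 : (0 : ℝ) < d := by exact_mod_cast hd
  refine ⟨1 - γ ^ (6 * d + 1) / (64 * d ^ 3),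
    by linarith [show 0 < γ ^ (6 * d + 1) / (64 * d ^ 3) by positivity], ?_⟩
  intro f P Q hPγ hP1 hQγ hQ1 _
  have hP : ∀ a, 0 < P a := fun a => hγ.trans_le (hPγ a)
  have hQ : ∀ a, 0 < Q a := fun a => hγ.trans_le (hQγ a)
  have htensor : KLf (prodPMF d P) (prodPMF d Q) = d * KLf P Q := KLf_prodPMF hP hQ hP1
  refine ⟨?_, htensor⟩
  obtain ⟨a, b, M, hM, hab, hKL⟩ := exists_ratio_gap hγ hPγ hQγ hP1 hQ1
  obtain ⟨s, hs⟩ := exists_le_restrictHellinger_fiber hcard f hγ hPγ hQγ hP1 hQ1 hM hab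
  have hchain := KLf_pushf_add_restrictHellinger_le f (prodPMF_pos hP) (prodPMF_pos hQ) s
  have hcard' : (Fintype.card α : ℝ) ≤ d := by exact_mod_cast hcard
  have hgain : γ ^ (6 * d + 1) / (64 * d ^ 3) * (d * KLf P Q) ≤ (γ ^ d) ^ 6 * M ^ 2 / 16 :=
    calc γ ^ (6 * d + 1) / (64 * d ^ 3) * (d * KLf P Q)
        = γ ^ (6 * d + 1) / (64 * d ^ 2) * KLf P Q := by field_simp
      _ ≤ γ ^ (6 * d + 1) / (64 * d ^ 2) * ((2 * d * M) ^ 2 / γ) :=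
          by gcongr; exact hKL.trans (by gcongr)
      _ = (γ ^ d) ^ 6 * M ^ 2 / 16 := by field_simp; ring
  rw [htensor] at hchain ⊢
  linarith
end

section
/- Let X ~ P and Y ~ Q be real-valued random variables. Let μ and ν be the restrictions of P and Q to ℝ∖{0}, and suppose μ and ν are mutually absolutely continuous. Let τ := max( ‖dμ/dν − 1‖_∞, ‖dν/dμ − 1‖_∞ ). Then for any p ≥ 1: W_p(X,Y) ≤ τ^{1/p} · ( (E|X|^p)^{1/p} + (E|Y|^p)^{1/p} ). -/
/-!
Off `0`, the laws `P` and `Q` share the part `ν.withDensity (min (dμ/dν) 1)`, and at `0` they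
share the mass `min (P {0}) (Q {0})`. Coupling this common part along the diagonal costs
nothing; coupling the two remainders independently costs, by Minkowski's inequality, at most the
sum of their `p`-th moments. The remainder of `P` is `ν.withDensity (dμ/dν - 1)` plus an atom at
`0`, where the cost vanishes, so its moment is at most `‖dμ/dν - 1‖_∞ E|Y|^p`; symmetrically for
`Q`.
-/

open MeasureTheory
open scoped ENNReal

/-- The `L^p` Wasserstein distance between two laws on `ℝ`:
`W_p(μ,ν) = (inf over couplings π of ∫ |x−y|^p dπ)^{1/p}`, valued in `ℝ≥0∞`. -/
noncomputable def Wp (p : ℝ) (μ ν : Measure ℝ) : ℝ≥0∞ :=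
  (⨅ (π : Measure (ℝ × ℝ)) (_ : π.map Prod.fst = μ ∧ π.map Prod.snd = ν),
    ∫⁻ q, ENNReal.ofReal (|q.1 - q.2| ^ p) ∂π) ^ (1 / p)

open Set

lemma ENNReal.sub_one_le_enorm_toReal_sub_one {a : ℝ≥0∞} (ha : a ≠ ∞) :
    a - 1 ≤ ‖a.toReal - 1‖ₑ := by
  calc a - 1 = ENNReal.ofReal (a.toReal - 1) := by
        rw [ENNReal.ofReal_sub _ zero_le_one, ENNReal.ofReal_toReal ha, ENNReal.ofReal_one]
    _ ≤ ‖a.toReal - 1‖ₑ := Real.ofReal_le_enorm _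

lemma ENNReal.mul_min_inv_one {a : ℝ≥0∞} (ha : a ≠ ∞) : a * min a⁻¹ 1 = min a 1 := by
  rcases eq_or_ne a 0 with rfl | h0
  · simp
  · rw [mul_right_mono.map_min, ENNReal.mul_inv_cancel h0 ha, mul_one, min_comm]

namespace MeasureTheory.Measure

section ProductCoupling

variable {α β : Type*} [MeasurableSpace α] [MeasurableSpace β]
  {σ : Measure α} {τ : Measure β} [IsFiniteMeasure σ] [IsFiniteMeasure τ]

theorem map_fst_inv_smul_prod (h : σ univ = τ univ) :
    ((σ univ)⁻¹ • σ.prod τ).map Prod.fst = σ := by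
  rw [Measure.map_smul, map_fst_prod, smul_smul, ← h]
  rcases eq_or_ne (σ univ) 0 with h0 | h0
  · simp [measure_univ_eq_zero.mp h0]
  · rw [ENNReal.inv_mul_cancel h0 (measure_ne_top _ _), one_smul]

theorem map_snd_inv_smul_prod (h : σ univ = τ univ) :
    ((σ univ)⁻¹ • σ.prod τ).map Prod.snd = τ := by
  rw [Measure.map_smul, map_snd_prod, smul_smul]
  rcases eq_or_ne (σ univ) 0 with h0 | h0
  · simp [measure_univ_eq_zero.mp (h ▸ h0)]
  · rw [ENNReal.inv_mul_cancel h0 (measure_ne_top _ _), one_smul]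

end ProductCoupling

variable {α : Type*} [MeasurableSpace α] {μ ν : Measure α}

theorem withDensity_min_rnDeriv_one_add_withDensity_rnDeriv_sub_one
    [μ.HaveLebesgueDecomposition ν] (hμν : μ ≪ ν) :
    ν.withDensity (fun x => min (μ.rnDeriv ν x) 1) + ν.withDensity (μ.rnDeriv ν - 1) = μ := by
  rw [← withDensity_add_left ((μ.measurable_rnDeriv ν).min measurable_const)]
  conv_rhs => rw [← withDensity_rnDeriv_eq μ ν hμν]
  congr 1
  funext x
  exact add_comm _ _ |>.trans tsub_add_min

/-- The common part `μ ⊓ ν` of two equivalent measures, seen from either side. -/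
theorem withDensity_min_rnDeriv_one_comm [SigmaFinite μ] [SigmaFinite ν]
    (hμν : μ ≪ ν) (hνμ : ν ≪ μ) :
    ν.withDensity (fun x => min (μ.rnDeriv ν x) 1) =
      μ.withDensity (fun x => min (ν.rnDeriv μ x) 1) := by
  calc ν.withDensity (fun x => min (μ.rnDeriv ν x) 1)
      = (ν.withDensity (μ.rnDeriv ν)).withDensity (fun x => min (ν.rnDeriv μ x) 1) := by
        rw [← withDensity_mul _ (μ.measurable_rnDeriv ν)
          ((ν.measurable_rnDeriv μ).min measurable_const)]
        refine withDensity_congr_ae ?_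
        filter_upwards [inv_rnDeriv' hνμ, rnDeriv_ne_top μ ν] with x hinv hfin
        rw [Pi.mul_apply, ← hinv, Pi.inv_apply, ENNReal.mul_min_inv_one hfin]
    _ = μ.withDensity (fun x => min (ν.rnDeriv μ x) 1) := by
        rw [withDensity_rnDeriv_eq μ ν hμν]

theorem withDensity_rnDeriv_sub_one_le [SigmaFinite μ] :
    ν.withDensity (μ.rnDeriv ν - 1) ≤ eLpNorm (fun x => (μ.rnDeriv ν x).toReal - 1) ⊤ ν • ν := by
  rw [← withDensity_const, eLpNorm_exponent_top]
  refine withDensity_mono ?_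
  filter_upwards [rnDeriv_ne_top μ ν,
    ae_le_eLpNormEssSup (f := fun x => (μ.rnDeriv ν x).toReal - 1)] with x hfin hle
  exact (ENNReal.sub_one_le_enorm_toReal_sub_one hfin).trans hle

end MeasureTheory.Measure

section Wasserstein

variable {p : ℝ}

theorem eLpNorm_ofReal_eq_lintegral {α : Type*} [MeasurableSpace α] {μ : Measure α}
    (f : α → ℝ) (hp : 0 < p) :
    eLpNorm f (ENNReal.ofReal p) μ = (∫⁻ x, ENNReal.ofReal (|f x| ^ p) ∂μ) ^ (1 / p) := by
  rw [eLpNorm_eq_lintegral_rpow_enorm_toReal (by simpa using hp) ENNReal.ofReal_ne_top,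
    ENNReal.toReal_ofReal hp.le]
  simp_rw [Real.enorm_eq_ofReal_abs, ENNReal.ofReal_rpow_of_nonneg (abs_nonneg _) hp.le]

theorem lintegral_abs_sub_rpow_rpow_le (hp : 1 ≤ p) (ρ : Measure (ℝ × ℝ)) :
    (∫⁻ q, ENNReal.ofReal (|q.1 - q.2| ^ p) ∂ρ) ^ (1 / p) ≤
      (∫⁻ x, ENNReal.ofReal (|x| ^ p) ∂ρ.map Prod.fst) ^ (1 / p) +
      (∫⁻ x, ENNReal.ofReal (|x| ^ p) ∂ρ.map Prod.snd) ^ (1 / p) := by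
  have hp0 : 0 < p := zero_lt_one.trans_le hp
  have hp1 : 1 ≤ ENNReal.ofReal p := by simpa using hp
  simp only [← eLpNorm_ofReal_eq_lintegral _ hp0]
  rw [eLpNorm_map_measure (by fun_prop) (by fun_prop),
    eLpNorm_map_measure (by fun_prop) (by fun_prop)]
  exact eLpNorm_sub_le (by fun_prop) (by fun_prop) hp1

theorem Wp_le_of_map_fst_of_map_snd (hp : 0 ≤ p) {P Q : Measure ℝ} {π : Measure (ℝ × ℝ)}
    (hπP : π.map Prod.fst = P) (hπQ : π.map Prod.snd = Q) :
    Wp p P Q ≤ (∫⁻ q, ENNReal.ofReal (|q.1 - q.2| ^ p) ∂π) ^ (1 / p) :=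
  ENNReal.rpow_le_rpow (iInf₂_le π ⟨hπP, hπQ⟩) (by positivity)

theorem lintegral_abs_sub_rpow_map_diag (hp : p ≠ 0) (m : Measure ℝ) :
    ∫⁻ q, ENNReal.ofReal (|q.1 - q.2| ^ p) ∂m.map (fun x => (x, x)) = 0 := by
  rw [lintegral_map (by fun_prop) (by fun_prop)]
  simp [Real.zero_rpow hp]

/-- Couple the common part `m` along the diagonal, at zero cost, and the two remainders
independently. -/
theorem Wp_le_of_eq_add {P Q m σ₁ σ₂ : Measure ℝ} [IsFiniteMeasure P]
    (hP : P = m + σ₁) (hQ : Q = m + σ₂) (hPQ : P univ = Q univ) (hp : 1 ≤ p) :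
    Wp p P Q ≤ (∫⁻ x, ENNReal.ofReal (|x| ^ p) ∂σ₁) ^ (1 / p) +
      (∫⁻ x, ENNReal.ofReal (|x| ^ p) ∂σ₂) ^ (1 / p) := by
  have : IsFiniteMeasure Q := ⟨hPQ ▸ measure_lt_top P univ⟩
  have : IsFiniteMeasure m := isFiniteMeasure_of_le P (hP ▸ Measure.le_add_right le_rfl)
  have : IsFiniteMeasure σ₁ := isFiniteMeasure_of_le P (hP ▸ Measure.le_add_left le_rfl)
  have : IsFiniteMeasure σ₂ := isFiniteMeasure_of_le Q (hQ ▸ Measure.le_add_left le_rfl)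
  have hσ : σ₁ univ = σ₂ univ := by
    rw [hP, hQ, Measure.add_apply, Measure.add_apply] at hPQ
    exact (ENNReal.add_right_inj (measure_ne_top m univ)).mp hPQ
  set ρ := (σ₁ univ)⁻¹ • σ₁.prod σ₂
  have hρ₁ : ρ.map Prod.fst = σ₁ := Measure.map_fst_inv_smul_prod hσ
  have hρ₂ : ρ.map Prod.snd = σ₂ := Measure.map_snd_inv_smul_prod hσ
  have hπP : (m.map (fun x => (x, x)) + ρ).map Prod.fst = P := by
    rw [Measure.map_add _ _ measurable_fst, Measure.map_map measurable_fst (by fun_prop), hρ₁]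
    exact (congrArg (· + σ₁) m.map_id).trans hP.symm
  have hπQ : (m.map (fun x => (x, x)) + ρ).map Prod.snd = Q := by
    rw [Measure.map_add _ _ measurable_snd, Measure.map_map measurable_snd (by fun_prop), hρ₂]
    exact (congrArg (· + σ₂) m.map_id).trans hQ.symm
  calc Wp p P Q
      ≤ (∫⁻ q, ENNReal.ofReal (|q.1 - q.2| ^ p) ∂(m.map (fun x => (x, x)) + ρ)) ^ (1 / p) :=
        Wp_le_of_map_fst_of_map_snd (by linarith) hπP hπQ
    _ = (∫⁻ q, ENNReal.ofReal (|q.1 - q.2| ^ p) ∂ρ) ^ (1 / p) := by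
        rw [lintegral_add_measure, lintegral_abs_sub_rpow_map_diag (by linarith), zero_add]
    _ ≤ _ := hρ₁ ▸ hρ₂ ▸ lintegral_abs_sub_rpow_rpow_le hp ρ

theorem eq_withDensity_add_dirac_add_withDensity_add_dirac {P μ ν : Measure ℝ}
    [μ.HaveLebesgueDecomposition ν] (hμ : μ = P.restrict {0}ᶜ) (hμν : μ ≪ ν) (b : ℝ≥0∞) :
    P = ((ν.withDensity fun x => min (μ.rnDeriv ν x) 1) + min (P {0}) b • Measure.dirac 0) +
      (ν.withDensity (μ.rnDeriv ν - 1) + (P {0} - b) • Measure.dirac 0) := by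
  have hatom : P {0} • Measure.dirac (0 : ℝ) =
      min (P {0}) b • Measure.dirac 0 + (P {0} - b) • Measure.dirac 0 := by
    rw [← add_smul, add_comm, tsub_add_min]
  calc P = μ + P {0} • Measure.dirac 0 := by
        rw [hμ, ← Measure.restrict_singleton,
          Measure.restrict_compl_add_restrict (measurableSet_singleton 0)]
    _ = _ := by
        conv_lhs => rw [← Measure.withDensity_min_rnDeriv_one_add_withDensity_rnDeriv_sub_one hμν,
          hatom, add_add_add_comm]

theorem lintegral_withDensity_rnDeriv_sub_one_add_dirac_le {Q μ ν : Measure ℝ} [SigmaFinite μ]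
    (hν : ν = Q.restrict {0}ᶜ) (hp : p ≠ 0) (k : ℝ≥0∞) :
    ∫⁻ x, ENNReal.ofReal (|x| ^ p) ∂(ν.withDensity (μ.rnDeriv ν - 1) + k • Measure.dirac 0) ≤
      eLpNorm (fun x => (μ.rnDeriv ν x).toReal - 1) ⊤ ν * ∫⁻ x, ENNReal.ofReal (|x| ^ p) ∂Q := by
  rw [lintegral_add_measure, lintegral_smul_measure, lintegral_dirac]
  simp only [abs_zero, Real.zero_rpow hp, ENNReal.ofReal_zero, smul_zero, add_zero]
  calc ∫⁻ x, ENNReal.ofReal (|x| ^ p) ∂ν.withDensity (μ.rnDeriv ν - 1)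
      ≤ ∫⁻ x, ENNReal.ofReal (|x| ^ p) ∂(eLpNorm (fun x => (μ.rnDeriv ν x).toReal - 1) ⊤ ν • ν) :=
        lintegral_mono' Measure.withDensity_rnDeriv_sub_one_le le_rfl
    _ ≤ _ := by
        rw [lintegral_smul_measure]
        exact mul_le_mul_right (lintegral_mono' (hν ▸ Measure.restrict_le_self) le_rfl) _

end Wasserstein

/-- Wasserstein bound from a multiplicative density comparison away from `0`:
if the restrictions `μ, ν` of `P, Q` to `ℝ \ {0}` are mutually absolutely continuous
and `τ = max(‖dμ/dν − 1‖_∞, ‖dν/dμ − 1‖_∞)`, then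
`W_p(X,Y) ≤ τ^{1/p} ((E|X|^p)^{1/p} + (E|Y|^p)^{1/p})`. -/
theorem stmt12 (P Q : Measure ℝ) [IsProbabilityMeasure P] [IsProbabilityMeasure Q]
    (μ ν : Measure ℝ) (hμ : μ = P.restrict ({0}ᶜ)) (hν : ν = Q.restrict ({0}ᶜ))
    (hac1 : μ ≪ ν) (hac2 : ν ≪ μ) (p : ℝ) (hp : 1 ≤ p) :
    Wp p P Q ≤
      (max (eLpNorm (fun x => (μ.rnDeriv ν x).toReal - 1) ⊤ ν)
           (eLpNorm (fun x => (ν.rnDeriv μ x).toReal - 1) ⊤ μ)) ^ (1 / p) *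
      ((∫⁻ x, ENNReal.ofReal (|x| ^ p) ∂P) ^ (1 / p) +
       (∫⁻ x, ENNReal.ofReal (|x| ^ p) ∂Q) ^ (1 / p)) := by
  have : IsFiniteMeasure μ := hμ ▸ inferInstance
  have : IsFiniteMeasure ν := hν ▸ inferInstance
  have hp0 : p ≠ 0 := by positivity
  have hP := eq_withDensity_add_dirac_add_withDensity_add_dirac hμ hac1 (Q {0})
  have hQ := eq_withDensity_add_dirac_add_withDensity_add_dirac hν hac2 (P {0})
  rw [← Measure.withDensity_min_rnDeriv_one_comm hac1 hac2, min_comm] at hQ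
  set τ₁ := eLpNorm (fun x => (μ.rnDeriv ν x).toReal - 1) ⊤ ν
  set τ₂ := eLpNorm (fun x => (ν.rnDeriv μ x).toReal - 1) ⊤ μ
  calc Wp p P Q
      ≤ _ := Wp_le_of_eq_add hP hQ (by simp) hp
    _ ≤ (τ₁ * ∫⁻ x, ENNReal.ofReal (|x| ^ p) ∂Q) ^ (1 / p) +
        (τ₂ * ∫⁻ x, ENNReal.ofReal (|x| ^ p) ∂P) ^ (1 / p) := by
      gcongr
      exacts [lintegral_withDensity_rnDeriv_sub_one_add_dirac_le hν hp0 _,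
        lintegral_withDensity_rnDeriv_sub_one_add_dirac_le hμ hp0 _]
    _ ≤ (max τ₁ τ₂ * ∫⁻ x, ENNReal.ofReal (|x| ^ p) ∂Q) ^ (1 / p) +
        (max τ₁ τ₂ * ∫⁻ x, ENNReal.ofReal (|x| ^ p) ∂P) ^ (1 / p) := by
      gcongr
      exacts [le_max_left _ _, le_max_right _ _]
    _ = _ := by
      rw [ENNReal.mul_rpow_of_nonneg _ _ (by positivity),
        ENNReal.mul_rpow_of_nonneg _ _ (by positivity), ← mul_add, add_comm]
end

section
/- Let a_u, b_v be functions on arbitrary sets U, V taking values in [−1,1], and let P_U, P_V be probability distributions under which a_U, b_V have zero mean and equal variance, and under which a_U and b_V are symmetric random variables (a_U has the same distribution as −a_U, likewise b_V). Define S̄ := a_Ū + b_V̄ with (Ū,V̄) ~ P_U × P_V, and Ŝ := (a_Û + b_V̂)/(1 + a_Û b_V̂) where (Û,V̂) has density P_U(u)P_V(v)(1 + a_u b_v). Then E[S̄²]·(1 − E[S̄²]/2) ≤ E[Ŝ²] ≤ E[S̄²]·(1 − E[S̄²]/4). -/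
/-!
Against the product measure, `E[Ŝ²]` is the integral of `(1 + ab) Ŝ² = (a + b)² / (1 + ab)`.
As `a` is symmetric, this integral does not change when the integrand is averaged over
`a ↦ -a`, and with `t = x²y²`, `s = x² + y² - 2t` the average is
`((x + y)² / (1 + xy) + (x - y)² / (1 - xy)) / 2 = s / (1 - t)`, which lies between `s` and
`s + t` on `[-1, 1]²` (the upper bound amounts to `t (1 - x²) (1 - y²) ≥ 0`). Integrating
against the product measure, with `σ = E[a²] = E[b²]`, gives `E[S̄²] = 2σ` and
`2σ - 2σ² ≤ E[Ŝ²] ≤ 2σ - σ²`.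
-/

open MeasureTheory

lemma mul_div_sq_self {K : Type*} [Field K] (c n : K) : c * (n / c) ^ 2 = n ^ 2 / c := by
  rcases eq_or_ne c 0 with rfl | hc
  · simp
  · field_simp

noncomputable def tiltedSq (x y : ℝ) : ℝ := (x + y) ^ 2 / (1 + x * y)

lemma measurable_tiltedSq : Measurable fun p : ℝ × ℝ => tiltedSq p.1 p.2 := by
  unfold tiltedSq
  fun_prop

lemma abs_tiltedSq_le_two {x y : ℝ} (hx : |x| ≤ 1) (hy : |y| ≤ 1) : |tiltedSq x y| ≤ 2 := by
  rw [abs_le] at hx hy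
  have hden : 0 ≤ 1 + x * y := by nlinarith
  unfold tiltedSq
  rw [abs_of_nonneg (div_nonneg (sq_nonneg _) hden)]
  rcases hden.eq_or_lt with h0 | h0
  · simp [← h0]
  · rw [div_le_iff₀ h0]
    nlinarith

lemma tiltedSq_add_tiltedSq_neg {x y : ℝ} (hxy : x ^ 2 * y ^ 2 ≠ 1) :
    (tiltedSq x y + tiltedSq (-x) y) / 2
      = (x ^ 2 + y ^ 2 - 2 * (x ^ 2 * y ^ 2)) / (1 - x ^ 2 * y ^ 2) := by
  have h₁ : 1 + x * y ≠ 0 := fun h => hxy (by linear_combination (x * y - 1) * h)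
  have h₂ : 1 - x * y ≠ 0 := fun h => hxy (by linear_combination (-x * y - 1) * h)
  have h₃ : 1 - x ^ 2 * y ^ 2 = (1 + x * y) * (1 - x * y) := by ring
  unfold tiltedSq
  rw [h₃, show 1 + -x * y = 1 - x * y by ring]
  field_simp
  ring

lemma tiltedSq_add_tiltedSq_neg_mem_Icc {x y : ℝ} (hx : |x| ≤ 1) (hy : |y| ≤ 1) :
    (tiltedSq x y + tiltedSq (-x) y) / 2
      ∈ Set.Icc (x ^ 2 + y ^ 2 - 2 * (x ^ 2 * y ^ 2)) (x ^ 2 + y ^ 2 - x ^ 2 * y ^ 2) := by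
  have hx2 : x ^ 2 ≤ 1 := (sq_le_one_iff_abs_le_one x).2 hx
  have hy2 : y ^ 2 ≤ 1 := (sq_le_one_iff_abs_le_one y).2 hy
  rcases (mul_le_one₀ hx2 (sq_nonneg y) hy2).eq_or_lt with h1 | hlt
  · -- `xy = ±1`: one of the two denominators vanishes and that term is `0` by convention.
    have hx1 : x ^ 2 = 1 := by nlinarith
    have hy1 : y ^ 2 = 1 := by nlinarith
    have hxy : (x * y - 1) * (x * y + 1) = 0 := by linear_combination h1
    unfold tiltedSq
    rcases mul_eq_zero.1 hxy with h | h
    · rw [show 1 + -x * y = 0 by linear_combination -h,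
        show 1 + x * y = 2 by linear_combination h, div_zero]
      constructor <;> linarith
    · rw [show 1 + x * y = 0 by linear_combination h,
        show 1 + -x * y = 2 by linear_combination -h, div_zero]
      constructor <;> linarith
  · rw [tiltedSq_add_tiltedSq_neg hlt.ne]
    have hpos : 0 < 1 - x ^ 2 * y ^ 2 := by linarith
    have hs : 0 ≤ x ^ 2 + y ^ 2 - 2 * (x ^ 2 * y ^ 2) := by
      nlinarith [mul_nonneg (sq_nonneg x) (sub_nonneg.2 hy2),
        mul_nonneg (sq_nonneg y) (sub_nonneg.2 hx2)]
    constructor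
    · rw [le_div_iff₀ hpos]
      nlinarith [mul_nonneg hs (mul_nonneg (sq_nonneg x) (sq_nonneg y))]
    · rw [div_le_iff₀ hpos]
      nlinarith [mul_nonneg (mul_nonneg (sq_nonneg x) (sq_nonneg y))
        (mul_nonneg (sub_nonneg.2 hx2) (sub_nonneg.2 hy2))]

section Integrals

variable {α β γ : Type*} [MeasurableSpace α] [MeasurableSpace β] [MeasurableSpace γ]
  {μ : Measure α} {ν : Measure β}

lemma integral_withDensity_ofReal {g : α → ℝ} (hg : Measurable g) (hg0 : 0 ≤ᵐ[μ] g)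
    (f : α → ℝ) :
    ∫ x, f x ∂μ.withDensity (fun x => ENNReal.ofReal (g x)) = ∫ x, g x * f x ∂μ := by
  rw [integral_withDensity_eq_integral_toReal_smul hg.ennreal_ofReal
    (ae_of_all _ fun _ => ENNReal.ofReal_lt_top)]
  refine integral_congr_ae ?_
  filter_upwards [hg0] with x hx
  rw [ENNReal.toReal_ofReal hx, smul_eq_mul]

lemma integral_prod_comp_fst_eq_of_map_eq [SFinite μ] [SFinite ν] {f f' : α → γ}
    (hf : Measurable f) (hf' : Measurable f') (h : μ.map f = μ.map f')
    {E : Type*} [NormedAddCommGroup E] [NormedSpace ℝ E] {F : γ × β → E}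
    (hF : StronglyMeasurable F) :
    ∫ w, F (f w.1, w.2) ∂μ.prod ν = ∫ w, F (f' w.1, w.2) ∂μ.prod ν := by
  have key : ∀ g : α → γ, Measurable g →
      ∫ w, F (g w.1, w.2) ∂μ.prod ν = ∫ p, F p ∂(μ.map g).prod ν := by
    intro g hg
    have hmap := Measure.map_prod_map μ ν hg measurable_id
    rw [Measure.map_id] at hmap
    rw [hmap, integral_map (hg.prodMap measurable_id).aemeasurable hF.aestronglyMeasurable]
    rfl
  rw [key f hf, key f' hf', h]

lemma integrable_tiltedSq_prod [IsFiniteMeasure μ] [IsFiniteMeasure ν]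
    {a : α → ℝ} {b : β → ℝ} (ha : Measurable a) (hb : Measurable b)
    (ha1 : ∀ x, |a x| ≤ 1) (hb1 : ∀ y, |b y| ≤ 1) :
    Integrable (fun w : α × β => tiltedSq (a w.1) (b w.2)) (μ.prod ν) :=
  Integrable.of_bound (measurable_tiltedSq.comp ((ha.comp measurable_fst).prodMk
      (hb.comp measurable_snd))).aestronglyMeasurable 2
    (ae_of_all _ fun w => abs_tiltedSq_le_two (ha1 w.1) (hb1 w.2))

variable [IsProbabilityMeasure μ] [IsProbabilityMeasure ν]

lemma integral_add_sub_mul_prod {f : α → ℝ} {g : β → ℝ} (hf : Integrable f μ)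
    (hg : Integrable g ν) (c : ℝ) :
    ∫ w, (f w.1 + g w.2 - c * (f w.1 * g w.2)) ∂μ.prod ν
      = ∫ x, f x ∂μ + ∫ y, g y ∂ν - c * ((∫ x, f x ∂μ) * ∫ y, g y ∂ν) := by
  have hfg : Integrable (fun w : α × β => f w.1 + g w.2) (μ.prod ν) :=
    (hf.comp_fst ν).add (hg.comp_snd μ)
  rw [integral_sub hfg ((hf.mul_prod hg).const_mul c),
    integral_add (hf.comp_fst ν) (hg.comp_snd μ), integral_const_mul, integral_fun_fst,
    integral_fun_snd, integral_prod_mul]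
  simp

lemma integral_add_sq_prod {a : α → ℝ} {b : β → ℝ} (ha : MemLp a 2 μ) (hb : MemLp b 2 ν) :
    ∫ w, (a w.1 + b w.2) ^ 2 ∂μ.prod ν
      = ∫ x, a x ^ 2 ∂μ + ∫ y, b y ^ 2 ∂ν + 2 * ((∫ x, a x ∂μ) * ∫ y, b y ∂ν) := by
  have hab := (ha.integrable one_le_two).mul_prod (hb.integrable one_le_two)
  have ha2 := ha.integrable_sq.comp_fst ν
  have hb2 := hb.integrable_sq.comp_snd μ
  have hab2 : Integrable (fun w : α × β => a w.1 ^ 2 + b w.2 ^ 2) (μ.prod ν) := ha2.add hb2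
  simp_rw [add_sq', mul_assoc]
  rw [integral_add hab2 (hab.const_mul 2), integral_add ha2 hb2, integral_const_mul,
    integral_fun_fst (fun x => a x ^ 2), integral_fun_snd (fun y => b y ^ 2),
    integral_prod_mul]
  simp

lemma integral_tiltedSq_mem_Icc {a : α → ℝ} {b : β → ℝ}
    (ha : Measurable a) (hb : Measurable b)
    (ha1 : ∀ x, |a x| ≤ 1) (hb1 : ∀ y, |b y| ≤ 1) (hsymm : μ.map a = μ.map (fun x => -a x)) :
    ∫ w, tiltedSq (a w.1) (b w.2) ∂μ.prod ν
      ∈ Set.Icc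
        (∫ x, a x ^ 2 ∂μ + ∫ y, b y ^ 2 ∂ν - 2 * ((∫ x, a x ^ 2 ∂μ) * ∫ y, b y ^ 2 ∂ν))
        (∫ x, a x ^ 2 ∂μ + ∫ y, b y ^ 2 ∂ν - (∫ x, a x ^ 2 ∂μ) * ∫ y, b y ^ 2 ∂ν) := by
  have hI := integrable_tiltedSq_prod (μ := μ) (ν := ν) ha hb ha1 hb1
  have hI' : Integrable (fun w : α × β => tiltedSq (-a w.1) (b w.2)) (μ.prod ν) :=
    integrable_tiltedSq_prod ha.neg hb (fun x => (abs_neg (a x)).le.trans (ha1 x)) hb1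
  have hA2 : Integrable (fun x => a x ^ 2) μ :=
    (MemLp.of_bound ha.aestronglyMeasurable 1 (ae_of_all _ ha1)).integrable_sq
  have hB2 : Integrable (fun y => b y ^ 2) ν :=
    (MemLp.of_bound hb.aestronglyMeasurable 1 (ae_of_all _ hb1)).integrable_sq
  have hbound (c : ℝ) : Integrable
      (fun w : α × β => a w.1 ^ 2 + b w.2 ^ 2 - c * (a w.1 ^ 2 * b w.2 ^ 2)) (μ.prod ν) :=
    ((hA2.comp_fst ν).add (hB2.comp_snd μ)).sub ((hA2.mul_prod hB2).const_mul c)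
  have hsymm' : ∫ w, tiltedSq (a w.1) (b w.2) ∂μ.prod ν
      = ∫ w, tiltedSq (-a w.1) (b w.2) ∂μ.prod ν :=
    integral_prod_comp_fst_eq_of_map_eq (F := fun p => tiltedSq p.1 (b p.2)) ha ha.neg hsymm
      (measurable_tiltedSq.comp
        (measurable_fst.prodMk (hb.comp measurable_snd))).stronglyMeasurable
  have havg : ∫ w, tiltedSq (a w.1) (b w.2) ∂μ.prod ν
      = ∫ w, (tiltedSq (a w.1) (b w.2) + tiltedSq (-a w.1) (b w.2)) / 2 ∂μ.prod ν := by
    rw [integral_div, integral_add hI hI', ← hsymm']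
    ring
  have hmid := (hI.add hI').div_const 2
  rw [havg, ← integral_add_sub_mul_prod hA2 hB2 2, ← one_mul ((∫ x, a x ^ 2 ∂μ) * _),
    ← integral_add_sub_mul_prod hA2 hB2 1]
  exact ⟨integral_mono (hbound 2) hmid
      fun w => (tiltedSq_add_tiltedSq_neg_mem_Icc (ha1 w.1) (hb1 w.2)).1,
    integral_mono hmid (hbound 1)
      fun w => by simpa using (tiltedSq_add_tiltedSq_neg_mem_Icc (ha1 w.1) (hb1 w.2)).2⟩

end Integrals

theorem stmt14_general {U V : Type*} [MeasurableSpace U] [MeasurableSpace V]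
    (PU : Measure U) (PV : Measure V)
    [IsProbabilityMeasure PU] [IsProbabilityMeasure PV]
    (a : U → ℝ) (b : V → ℝ) (ha : Measurable a) (hb : Measurable b)
    (har : ∀ u, a u ∈ Set.Icc (-1 : ℝ) 1) (hbr : ∀ v, b v ∈ Set.Icc (-1 : ℝ) 1)
    (hma : (∫ u, a u ∂PU) = 0)
    (hvar : (∫ u, (a u) ^ 2 ∂PU) = ∫ v, (b v) ^ 2 ∂PV)
    (hsymA : PU.map a = PU.map (fun u => -a u)) :
    (∫ w : U × V, (a w.1 + b w.2) ^ 2 ∂(PU.prod PV)) *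
        (1 - (∫ w : U × V, (a w.1 + b w.2) ^ 2 ∂(PU.prod PV)) / 2)
      ≤ (∫ w : U × V, ((a w.1 + b w.2) / (1 + a w.1 * b w.2)) ^ 2
          ∂((PU.prod PV).withDensity (fun w => ENNReal.ofReal (1 + a w.1 * b w.2)))) ∧
    (∫ w : U × V, ((a w.1 + b w.2) / (1 + a w.1 * b w.2)) ^ 2
          ∂((PU.prod PV).withDensity (fun w => ENNReal.ofReal (1 + a w.1 * b w.2))))
      ≤ (∫ w : U × V, (a w.1 + b w.2) ^ 2 ∂(PU.prod PV)) *
        (1 - (∫ w : U × V, (a w.1 + b w.2) ^ 2 ∂(PU.prod PV)) / 4) := by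
  have ha1 : ∀ u, |a u| ≤ 1 := fun u => abs_le.2 (har u)
  have hb1 : ∀ v, |b v| ≤ 1 := fun v => abs_le.2 (hbr v)
  have hdens : ∀ w : U × V, 0 ≤ 1 + a w.1 * b w.2 := fun w => by
    nlinarith [(har w.1).1, (har w.1).2, (hbr w.2).1, (hbr w.2).2]
  rw [integral_withDensity_ofReal (by fun_prop) (ae_of_all _ hdens)]
  simp_rw [mul_div_sq_self]
  rw [integral_add_sq_prod (MemLp.of_bound ha.aestronglyMeasurable 1 (ae_of_all _ ha1))
    (MemLp.of_bound hb.aestronglyMeasurable 1 (ae_of_all _ hb1)), hma, zero_mul, mul_zero,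
    add_zero, ← hvar]
  obtain ⟨hlower, hupper⟩ := integral_tiltedSq_mem_Icc ha hb ha1 hb1 hsymA (ν := PV)
  rw [← hvar] at hlower hupper
  simp only [tiltedSq] at hlower hupper
  exact ⟨by linarith, by linarith⟩

/-- Two-sided second moment estimate for the BP-type combination:
if `a_U`, `b_V` are `[-1,1]`-valued, symmetric, with zero mean and equal variance,
and `S̄ = a + b` under the product measure while `Ŝ = (a+b)/(1+ab)` under the tilted
measure `P_U P_V (1 + ab)`, then
`E[S̄²](1 − E[S̄²]/2) ≤ E[Ŝ²] ≤ E[S̄²](1 − E[S̄²]/4)`. -/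
theorem stmt14 {U V : Type*} [MeasurableSpace U] [MeasurableSpace V]
    (PU : Measure U) (PV : Measure V)
    [IsProbabilityMeasure PU] [IsProbabilityMeasure PV]
    (a : U → ℝ) (b : V → ℝ) (ha : Measurable a) (hb : Measurable b)
    (har : ∀ u, a u ∈ Set.Icc (-1 : ℝ) 1) (hbr : ∀ v, b v ∈ Set.Icc (-1 : ℝ) 1)
    (hma : (∫ u, a u ∂PU) = 0) (hmb : (∫ v, b v ∂PV) = 0)
    (hvar : (∫ u, (a u) ^ 2 ∂PU) = ∫ v, (b v) ^ 2 ∂PV)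
    (hsymA : PU.map a = PU.map (fun u => -a u))
    (hsymB : PV.map b = PV.map (fun v => -b v)) :
    (∫ w : U × V, (a w.1 + b w.2) ^ 2 ∂(PU.prod PV)) *
        (1 - (∫ w : U × V, (a w.1 + b w.2) ^ 2 ∂(PU.prod PV)) / 2)
      ≤ (∫ w : U × V, ((a w.1 + b w.2) / (1 + a w.1 * b w.2)) ^ 2
          ∂((PU.prod PV).withDensity (fun w => ENNReal.ofReal (1 + a w.1 * b w.2)))) ∧
    (∫ w : U × V, ((a w.1 + b w.2) / (1 + a w.1 * b w.2)) ^ 2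
          ∂((PU.prod PV).withDensity (fun w => ENNReal.ofReal (1 + a w.1 * b w.2))))
      ≤ (∫ w : U × V, (a w.1 + b w.2) ^ 2 ∂(PU.prod PV)) *
        (1 - (∫ w : U × V, (a w.1 + b w.2) ^ 2 ∂(PU.prod PV)) / 4) :=
  stmt14_general PU PV a b ha hb har hbr hma hvar hsymA
end
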